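/- arXiv:2406.17712 — 2 statements merged into one kernel-verified Lean document; each statement's English description precedes it below -/
import Mathlib

section
/- Let L be a commutative unital quantale and let (P, e) be an algebraic L-dcpo. Equip the set K(P) of compact elements with the operator ⟨A⟩ = ⋁_{x∈K(P)} A(x) ⊗ (↓x restricted to K(P)) for A : K(P) → L, where ↓x(y) = e(y,x). Then (K(P), ⟨·⟩) is an L-closure space, and its directed closed sets are exactly the restrictions of principal lower sets: 𝔠(K(P)) = { (↓x)|_{K(P)} | x ∈ P }. -/
universe u

/-- A commutative unital quantale structure on a complete lattice `L`. -/
structure CommQuantale (L : Type u) [CompleteLattice L] : Type u where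
  mul : L → L → L
  mul_comm : ∀ a b, mul a b = mul b a
  mul_assoc : ∀ a b c, mul (mul a b) c = mul a (mul b c)
  unit : L
  mul_unit : ∀ a, mul a unit = a
  mul_sSup : ∀ (a : L) (S : Set L), mul a (sSup S) = ⨆ s ∈ S, mul a s

namespace CommQuantale

variable {L : Type u} [CompleteLattice L]

/-- The residuation `b → c`, the right adjoint of `⊗`. -/
def res (Q : CommQuantale L) (b c : L) : L := sSup {a | Q.mul a b ≤ c}

/-- `sub(A,B) = ⋀ₓ (A x → B x)` for `L`-subsets. -/
def subL (Q : CommQuantale L) {X : Type u} (A B : X → L) : L :=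
  ⨅ x, Q.res (A x) (B x)

open Classical in
/-- The characteristic function `u_x`. -/
noncomputable def ux (Q : CommQuantale L) {X : Type u} (x : X) : X → L :=
  fun y => if y = x then Q.unit else ⊥

/-- `e` is an `L`-order on `P`. -/
def IsLOrder (Q : CommQuantale L) {P : Type u} (e : P → P → L) : Prop :=
  (∀ x, Q.unit ≤ e x x) ∧
  (∀ x y z, Q.mul (e x y) (e y z) ≤ e x z) ∧
  (∀ x y, Q.unit ≤ e x y → Q.unit ≤ e y x → x = y)

/-- `D` is a directed `L`-subset of `(P, e)`. -/
def IsDirectedL (Q : CommQuantale L) {P : Type u} (e : P → P → L) (D : P → L) : Prop :=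
  (Q.unit ≤ ⨆ x, D x) ∧
  (∀ x y, Q.mul (D x) (D y) ≤ ⨆ z, Q.mul (Q.mul (D z) (e x z)) (e y z))

/-- `x₀` is the supremum `⊔A` of the `L`-subset `A`. -/
def IsSupL (Q : CommQuantale L) {P : Type u} (e : P → P → L) (A : P → L) (x₀ : P) : Prop :=
  ∀ y, e x₀ y = Q.subL A (fun x => e x y)

/-- `(P, e)` is an `L`-dcpo: every directed `L`-subset has a supremum. -/
def IsDcpoL (Q : CommQuantale L) {P : Type u} (e : P → P → L) : Prop :=
  ∀ D : P → L, Q.IsDirectedL e D → ∃ s, Q.IsSupL e D s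

/-- `⇓x : P → L`, i.e. `⇓x(y) = ⋀_{D directed} (e(x, ⊔D) → ⋁_d D(d) ⊗ e(y,d))`. -/
def wayBelow (Q : CommQuantale L) {P : Type u} (e : P → P → L) (x : P) : P → L := fun y =>
  ⨅ (D : P → L) (_ : Q.IsDirectedL e D) (s : P) (_ : Q.IsSupL e D s),
    Q.res (e x s) (⨆ d, Q.mul (D d) (e y d))

/-- `(P, e)` is a continuous `L`-dcpo. -/
def IsContinuousLDcpo (Q : CommQuantale L) {P : Type u} (e : P → P → L) : Prop :=
  Q.IsLOrder e ∧ Q.IsDcpoL e ∧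
  ∀ x, Q.IsDirectedL e (Q.wayBelow e x) ∧ Q.IsSupL e (Q.wayBelow e x) x

open Classical in
/-- `k(x)(y) = e(y,x)` if `y` is compact (i.e. `u ≤ ⇓y(y)`), else `0`. -/
noncomputable def kfun (Q : CommQuantale L) {P : Type u} (e : P → P → L) (x : P) : P → L :=
  fun y => if Q.unit ≤ Q.wayBelow e y y then e y x else ⊥

/-- `(P, e)` is an algebraic `L`-dcpo. -/
noncomputable def IsAlgebraicLDcpo (Q : CommQuantale L) {P : Type u} (e : P → P → L) : Prop :=
  Q.IsLOrder e ∧ Q.IsDcpoL e ∧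
  ∀ x, Q.IsDirectedL e (Q.kfun e x) ∧ Q.IsSupL e (Q.kfun e x) x

/-- `cl` is a generalized `L`-closure operator: (GC1) and (GC2). -/
def IsGenClosure (Q : CommQuantale L) {X : Type u} (cl : (X → L) → (X → L)) : Prop :=
  (∀ A B, Q.subL A B ≤ Q.subL (cl A) (cl B)) ∧
  (∀ A, cl (cl A) ≤ cl A)

/-- Interpolation conditions (IT1)-(IT3). -/
noncomputable def IsInterpolative (Q : CommQuantale L) {X : Type u}
    (cl : (X → L) → (X → L)) : Prop :=
  (∀ x, Q.unit ≤ ⨆ t, cl (Q.ux x) t) ∧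
  (∀ x y, cl (Q.ux x) y ≤ ⨆ t, Q.mul (cl (Q.ux x) t) (cl (Q.ux t) y)) ∧
  (∀ x a b, Q.mul (cl (Q.ux x) a) (cl (Q.ux x) b) ≤
    ⨆ t, Q.mul (Q.mul (cl (Q.ux x) t) (cl (Q.ux t) a)) (cl (Q.ux t) b))

/-- `U` is a directed closed set: (DC1)-(DC4). -/
noncomputable def IsDirClosed (Q : CommQuantale L) {X : Type u}
    (cl : (X → L) → (X → L)) (U : X → L) : Prop :=
  (Q.unit ≤ ⨆ x, U x) ∧
  (∀ x, U x ≤ Q.subL (cl (Q.ux x)) U) ∧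
  (∀ x, U x ≤ ⨆ y, Q.mul (U y) (cl (Q.ux y) x)) ∧
  (∀ x y, Q.mul (U x) (U y) ≤
    ⨆ z, Q.mul (Q.mul (U z) (cl (Q.ux z) x)) (cl (Q.ux z) y))

end CommQuantale

/-!
The operator `⟨A⟩ = ⋁ₓ A(x) ⊗ ↓x` is a closure operator on any `L`-ordered set: reflexivity of
the order gives `A ≤ ⟨A⟩` and transitivity gives idempotence. On `K(P)` it satisfies
`⟨u_z⟩ = ↓z`, so the axioms of a directed closed set become statements about `e` alone.
A restricted principal lower set `↓x|K(P)` is then directed closed because `k(x)` is directed with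
supremum `x` and every element of `K(P)` is compact. Conversely, a directed closed set `U`,
extended by `0` to `P`, is a directed `L`-subset of `P`; if `s` is its supremum, compactness of
each `y ∈ K(P)` gives `e(y,s) ≤ ⋁_d U(d) ⊗ e(y,d) ≤ U(y)`, and `U(y) ≤ e(y,s)` because `s` is an
upper bound, so `U = ↓s|K(P)`.
-/

namespace CommQuantale

variable {L : Type u} [CompleteLattice L] (Q : CommQuantale L)

lemma unit_mul (a : L) : Q.mul Q.unit a = a := by rw [Q.mul_comm, Q.mul_unit]

lemma mul_iSup {ι : Sort*} (a : L) (f : ι → L) :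
    Q.mul a (⨆ i, f i) = ⨆ i, Q.mul a (f i) := by
  rw [iSup, Q.mul_sSup, iSup_range]

lemma iSup_mul {ι : Sort*} (a : L) (f : ι → L) :
    Q.mul (⨆ i, f i) a = ⨆ i, Q.mul (f i) a := by
  simp only [Q.mul_comm _ a, Q.mul_iSup]

lemma mul_bot (a : L) : Q.mul a ⊥ = ⊥ := by
  simpa using Q.mul_sSup a ∅

lemma bot_mul (a : L) : Q.mul ⊥ a = ⊥ := by rw [Q.mul_comm, Q.mul_bot]

lemma mul_right_mono (a : L) : Monotone (Q.mul a) := fun b c hbc => by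
  have hsup := Q.mul_sSup a {b, c}
  rw [sSup_pair, sup_eq_right.mpr hbc, iSup_pair] at hsup
  exact hsup ▸ le_sup_left

lemma mul_le_mul {a a' b b' : L} (ha : a ≤ a') (hb : b ≤ b') : Q.mul a b ≤ Q.mul a' b' :=
  calc Q.mul a b ≤ Q.mul a b' := Q.mul_right_mono a hb
    _ = Q.mul b' a := Q.mul_comm _ _
    _ ≤ Q.mul b' a' := Q.mul_right_mono b' ha
    _ = Q.mul a' b' := Q.mul_comm _ _

lemma le_res_iff {a b c : L} : a ≤ Q.res b c ↔ Q.mul a b ≤ c := by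
  refine ⟨fun h => (Q.mul_le_mul h le_rfl).trans ?_, fun h => le_sSup h⟩
  rw [res, Q.mul_comm, Q.mul_sSup]
  exact iSup₂_le fun a ha => Q.mul_comm b a ▸ ha

lemma le_subL_iff {X : Type u} {a : L} {A B : X → L} :
    a ≤ Q.subL A B ↔ ∀ x, Q.mul a (A x) ≤ B x := by
  simp only [subL, le_iInf_iff, Q.le_res_iff]

section DownClosure

variable {X : Type u} (d : X → X → L)

/-- `⟨A⟩ = ⋁ₓ A(x) ⊗ ↓x` for the `L`-relation `d`, where `↓x(y) = d y x`. -/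
def downClosure (A : X → L) : X → L := fun y => ⨆ x, Q.mul (A x) (d y x)

variable {Q d}

lemma downClosure_ux (z : X) : Q.downClosure d (Q.ux z) = fun y => d y z := by
  classical
  funext y
  refine le_antisymm (iSup_le fun x => ?_) ?_
  · by_cases hx : x = z
    · subst hx; simp [ux, Q.unit_mul]
    · simp [ux, hx, Q.bot_mul]
  · simpa [downClosure, ux, Q.unit_mul] using le_iSup (fun x => Q.mul (Q.ux z x) (d y x)) z

lemma subL_le_subL_downClosure (A B : X → L) :
    Q.subL A B ≤ Q.subL (Q.downClosure d A) (Q.downClosure d B) := by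
  refine Q.le_subL_iff.mpr fun y => ?_
  rw [downClosure, Q.mul_iSup]
  refine iSup_le fun x => ?_
  rw [← Q.mul_assoc]
  exact (Q.mul_le_mul (Q.le_subL_iff.mp le_rfl x) le_rfl).trans
    (le_iSup (fun x => Q.mul (B x) (d y x)) x)

lemma downClosure_downClosure_le (htrans : ∀ x y z, Q.mul (d x y) (d y z) ≤ d x z)
    (A : X → L) : Q.downClosure d (Q.downClosure d A) ≤ Q.downClosure d A := fun y => by
  refine iSup_le fun x => ?_
  rw [downClosure, Q.iSup_mul]
  refine iSup_le fun z => ?_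
  rw [Q.mul_assoc, Q.mul_comm (d x z)]
  exact (Q.mul_right_mono _ (htrans y x z)).trans
    (le_iSup (fun z => Q.mul (A z) (d y z)) z)

lemma isGenClosure_downClosure (htrans : ∀ x y z, Q.mul (d x y) (d y z) ≤ d x z) :
    Q.IsGenClosure (Q.downClosure d) :=
  ⟨subL_le_subL_downClosure, downClosure_downClosure_le htrans⟩

lemma le_downClosure (hrefl : ∀ x, Q.unit ≤ d x x) (A : X → L) : A ≤ Q.downClosure d A :=
  fun y => calc A y = Q.mul (A y) Q.unit := (Q.mul_unit _).symm
    _ ≤ Q.mul (A y) (d y y) := Q.mul_right_mono _ (hrefl y)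
    _ ≤ Q.downClosure d A y := le_iSup (fun x => Q.mul (A x) (d y x)) y

lemma isDirClosed_downClosure_iff {U : X → L} :
    Q.IsDirClosed (Q.downClosure d) U ↔
      (Q.unit ≤ ⨆ x, U x) ∧
      (∀ x y, Q.mul (U x) (d y x) ≤ U y) ∧
      (∀ x, U x ≤ ⨆ y, Q.mul (U y) (d x y)) ∧
      (∀ x y, Q.mul (U x) (U y) ≤ ⨆ z, Q.mul (Q.mul (U z) (d x z)) (d y z)) := by
  simp only [IsDirClosed, downClosure_ux, Q.le_subL_iff]

end DownClosure

section ExtendSubtype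

variable {P : Type u} {p : P → Prop}

/-- Extension by `⊥`: the supremum over the proofs of `p x` is empty when `p x` fails. -/
def extendSubtype (U : Subtype p → L) : P → L := fun x => ⨆ h : p x, U ⟨x, h⟩

lemma extendSubtype_coe (U : Subtype p → L) (k : Subtype p) : extendSubtype U k.1 = U k :=
  iSup_pos k.2

lemma iSup_extendSubtype (U : Subtype p → L) : ⨆ x, extendSubtype U x = ⨆ k, U k :=
  iSup_subtype'

lemma iSup_extendSubtype_mul (U : Subtype p → L) (f : P → L) :
    ⨆ x, Q.mul (extendSubtype U x) (f x) = ⨆ k : Subtype p, Q.mul (U k) (f k) := by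
  simp only [extendSubtype, Q.iSup_mul]
  exact iSup_subtype'

lemma isDirectedL_extendSubtype_iff (e : P → P → L) (U : Subtype p → L) :
    Q.IsDirectedL e (extendSubtype U) ↔
      (Q.unit ≤ ⨆ k, U k) ∧
      ∀ a b : Subtype p,
        Q.mul (U a) (U b) ≤ ⨆ z : Subtype p, Q.mul (Q.mul (U z) (e a z)) (e b z) := by
  have hsup : ∀ a b : P, ⨆ z, Q.mul (Q.mul (extendSubtype U z) (e a z)) (e b z) =
      ⨆ z : Subtype p, Q.mul (Q.mul (U z) (e a z)) (e b z) := fun a b => by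
    simp only [Q.mul_assoc, Q.iSup_extendSubtype_mul]
  simp only [IsDirectedL, iSup_extendSubtype, hsup]
  refine and_congr_right fun _ => ⟨fun h a b => ?_, fun h a b => ?_⟩
  · simpa only [extendSubtype_coe] using h a b
  · simp only [extendSubtype, Q.mul_iSup, Q.iSup_mul]
    exact iSup_le fun hb => iSup_le fun ha => h ⟨a, ha⟩ ⟨b, hb⟩

end ExtendSubtype

section Compact

variable {P : Type u} {e : P → P → L}

lemma le_iSup_mul_of_compact {c : P} (hc : Q.unit ≤ Q.wayBelow e c c) {D : P → L}
    (hD : Q.IsDirectedL e D) {s : P} (hs : Q.IsSupL e D s) :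
    e c s ≤ ⨆ d, Q.mul (D d) (e c d) := by
  have hres := hc.trans (iInf_le_of_le D (iInf_le_of_le hD (iInf₂_le s hs)))
  simpa only [Q.le_res_iff, Q.unit_mul] using hres

lemma kfun_eq_extendSubtype (x : P) :
    Q.kfun e x = extendSubtype fun k : {c // Q.unit ≤ Q.wayBelow e c c} => e k.1 x := by
  classical
  funext c
  by_cases hc : Q.unit ≤ Q.wayBelow e c c <;> simp [kfun, extendSubtype, hc]

variable (e) in
/-- `e` on `K(P)`; the operator of the theorem is `downClosure (compactOrder Q e)`. -/
def compactOrder (a b : {c // Q.unit ≤ Q.wayBelow e c c}) : L := e a.1 b.1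

variable {Q}

lemma isDirClosed_principal (htrans : ∀ x y z, Q.mul (e x y) (e y z) ≤ e x z) {x : P}
    (hdir : Q.IsDirectedL e (Q.kfun e x)) (hsup : Q.IsSupL e (Q.kfun e x) x) :
    Q.IsDirClosed (Q.downClosure (compactOrder Q e)) fun k => e k.1 x := by
  have hcpt := fun c : {c // Q.unit ≤ Q.wayBelow e c c} =>
    Q.le_iSup_mul_of_compact c.2 hdir hsup
  rw [kfun_eq_extendSubtype, isDirectedL_extendSubtype_iff] at hdir
  rw [kfun_eq_extendSubtype] at hcpt
  simp only [iSup_extendSubtype_mul] at hcpt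
  exact isDirClosed_downClosure_iff.mpr
    ⟨hdir.1, fun a b => Q.mul_comm _ _ ▸ htrans b.1 a.1 x, hcpt, hdir.2⟩

lemma exists_eq_principal_of_isDirClosed (hrefl : ∀ x, Q.unit ≤ e x x) (hdcpo : Q.IsDcpoL e)
    {U : {c // Q.unit ≤ Q.wayBelow e c c} → L}
    (hU : Q.IsDirClosed (Q.downClosure (compactOrder Q e)) U) :
    ∃ s : P, U = fun k => e k.1 s := by
  obtain ⟨hdc1, hdc2, -, hdc4⟩ := isDirClosed_downClosure_iff.mp hU
  have hdir : Q.IsDirectedL e (extendSubtype U) :=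
    (Q.isDirectedL_extendSubtype_iff e U).mpr ⟨hdc1, hdc4⟩
  obtain ⟨s, hs⟩ := hdcpo _ hdir
  refine ⟨s, funext fun y => le_antisymm ?_ ?_⟩
  · have hub : Q.unit ≤ Q.subL (extendSubtype U) fun p => e p s := hs s ▸ hrefl s
    simpa only [Q.unit_mul, extendSubtype_coe] using Q.le_subL_iff.mp hub y.1
  · calc e y.1 s ≤ ⨆ d, Q.mul (extendSubtype U d) (e y.1 d) :=
          Q.le_iSup_mul_of_compact y.2 hdir hs
      _ = ⨆ k, Q.mul (U k) (e y.1 k.1) := Q.iSup_extendSubtype_mul U _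
      _ ≤ U y := iSup_le fun k => hdc2 k y

end Compact

end CommQuantale

open CommQuantale in
/-- For an algebraic L-dcpo (P,e), the set K(P) of compact elements with
the operator ⟨A⟩ = ⋁_{x∈K(P)} A(x) ⊗ (↓x restricted to K(P)) is an L-closure space, and
its directed closed sets are exactly the restrictions of principal lower sets:
𝔠(K(P)) = {(↓x)|_{K(P)} | x ∈ P}. -/
theorem stmt14 {L P : Type u} [CompleteLattice L] (Q : CommQuantale L)
    (e : P → P → L) (hord : Q.IsLOrder e) (hdcpo : Q.IsDcpoL e)
    (halg : ∀ x, Q.IsDirectedL e (Q.kfun e x) ∧ Q.IsSupL e (Q.kfun e x) x) :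
    Q.IsGenClosure
      (fun A : {x : P // Q.unit ≤ Q.wayBelow e x x} → L =>
        fun y => ⨆ x : {x : P // Q.unit ≤ Q.wayBelow e x x}, Q.mul (A x) (e y.1 x.1)) ∧
    (∀ A : {x : P // Q.unit ≤ Q.wayBelow e x x} → L,
      A ≤ fun y => ⨆ x : {x : P // Q.unit ≤ Q.wayBelow e x x}, Q.mul (A x) (e y.1 x.1)) ∧
    ({U : {x : P // Q.unit ≤ Q.wayBelow e x x} → L |
        Q.IsDirClosed
          (fun A => fun y =>
            ⨆ x : {x : P // Q.unit ≤ Q.wayBelow e x x}, Q.mul (A x) (e y.1 x.1)) U}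
      = {U | ∃ x : P, U = fun y => e y.1 x}) := by
  obtain ⟨hrefl, htrans, -⟩ := hord
  refine ⟨isGenClosure_downClosure (d := compactOrder Q e) fun a b c => htrans a.1 b.1 c.1,
    le_downClosure (d := compactOrder Q e) fun a => hrefl a.1,
    Set.ext fun U => ⟨exists_eq_principal_of_isDirClosed hrefl hdcpo, ?_⟩⟩
  rintro ⟨x, rfl⟩
  exact isDirClosed_principal htrans (halg x).1 (halg x).2
end

section
/- Let L be a commutative unital quantale. An L-ordered set (P, e) is an algebraic L-dcpo if and only if there exists an L-closure space (X, ⟨·⟩) such that (𝔠(X), sub) is L-order-isomorphic to (P, e). -/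
universe u

namespace CommQuantale


variable {L : Type u} [CompleteLattice L] (Q : CommQuantale L)

lemma mul_le_mul_right {a b : L} (c : L) (h : a ≤ b) : Q.mul a c ≤ Q.mul b c := by
  have h2 : Q.mul c b = ⨆ s ∈ ({a, b} : Set L), Q.mul c s := by
    rw [← Q.mul_sSup, sSup_pair, sup_eq_right.2 h]
  rw [Q.mul_comm a c, Q.mul_comm b c, h2]
  exact le_iSup₂ (f := fun s (_ : s ∈ ({a, b} : Set L)) => Q.mul c s) a (Set.mem_insert a {b})

lemma mul_le_mul_left {a b : L} (c : L) (h : a ≤ b) : Q.mul c a ≤ Q.mul c b := by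
  rw [Q.mul_comm c a, Q.mul_comm c b]; exact Q.mul_le_mul_right c h

lemma mul_le_mul' {a b c d : L} (h1 : a ≤ b) (h2 : c ≤ d) : Q.mul a c ≤ Q.mul b d :=
  (Q.mul_le_mul_right c h1).trans (Q.mul_le_mul_left b h2)

lemma res_mul_le (b c : L) : Q.mul (Q.res b c) b ≤ c := Q.le_res_iff.1 le_rfl

lemma res_unit (c : L) : Q.res Q.unit c = c := by
  apply le_antisymm
  · have := Q.res_mul_le Q.unit c; rwa [Q.mul_unit] at this
  · rw [Q.le_res_iff, Q.mul_unit]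

lemma unit_le_res_self (a : L) : Q.unit ≤ Q.res a a := by rw [Q.le_res_iff, Q.unit_mul]

lemma le_of_unit_le_res {a b : L} (h : Q.unit ≤ Q.res a b) : a ≤ b := by
  have := Q.mul_le_mul_right a h; rw [Q.unit_mul] at this
  exact this.trans (Q.res_mul_le a b)
  
lemma res_le_res {a b c d : L} (h1 : c ≤ a) (h2 : b ≤ d) : Q.res a b ≤ Q.res c d := by
  rw [Q.le_res_iff]
  exact ((Q.mul_le_mul_left _ h1).trans (Q.res_mul_le a b)).trans h2

lemma res_iSup_left {ι : Sort*} (f : ι → L) (c : L) :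
    Q.res (⨆ i, f i) c = ⨅ i, Q.res (f i) c := by
  apply le_antisymm
  · exact le_iInf fun i => Q.res_le_res (le_iSup f i) le_rfl
  · rw [Q.le_res_iff, Q.mul_iSup]
    exact iSup_le fun i => (Q.mul_le_mul_right (f i) (iInf_le _ i)).trans (Q.res_mul_le (f i) c)

lemma res_mul_eq (a b c : L) : Q.res (Q.mul a b) c = Q.res a (Q.res b c) := by
  apply le_antisymm <;> rw [Q.le_res_iff]
  · rw [Q.le_res_iff, Q.mul_assoc]; exact Q.res_mul_le _ _
  · calc Q.mul (Q.res a (Q.res b c)) (Q.mul a b)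
        = Q.mul (Q.mul (Q.res a (Q.res b c)) a) b := (Q.mul_assoc _ _ _).symm
    _ ≤ Q.mul (Q.res b c) b := Q.mul_le_mul_right b (Q.res_mul_le _ _)
    _ ≤ c := Q.res_mul_le _ _

lemma mul_res_le_res (a b c : L) : Q.mul a (Q.res b c) ≤ Q.res b (Q.mul a c) := by
  rw [Q.le_res_iff, Q.mul_assoc]
  exact Q.mul_le_mul_left a (Q.res_mul_le b c)


end CommQuantale
namespace CommQuantale
variable {L : Type u} [CompleteLattice L] (Q : CommQuantale L)

lemma subL_le_res {X : Type u} (A B : X → L) (x : X) : Q.subL A B ≤ Q.res (A x) (B x) :=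
  iInf_le _ x

lemma mul_subL_le {X : Type u} (A B : X → L) (x : X) : Q.mul (A x) (Q.subL A B) ≤ B x := by
  rw [Q.mul_comm]
  exact (Q.mul_le_mul_right _ (Q.subL_le_res A B x)).trans (Q.res_mul_le _ _)

lemma unit_le_subL_self {X : Type u} (A : X → L) : Q.unit ≤ Q.subL A A :=
  Q.le_subL_iff.2 fun x => (Q.unit_mul (A x)).le

lemma subL_trans {X : Type u} (A B C : X → L) :
    Q.mul (Q.subL A B) (Q.subL B C) ≤ Q.subL A C := by
  rw [Q.le_subL_iff]
  intro x
  calc Q.mul (Q.mul (Q.subL A B) (Q.subL B C)) (A x)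
      = Q.mul (Q.mul (A x) (Q.subL A B)) (Q.subL B C) := by
        rw [Q.mul_comm _ (A x), ← Q.mul_assoc]
  _ ≤ Q.mul (B x) (Q.subL B C) := Q.mul_le_mul_right _ (Q.mul_subL_le A B x)
  _ ≤ C x := Q.mul_subL_le B C x

lemma le_of_unit_le_subL {X : Type u} {A B : X → L} (h : Q.unit ≤ Q.subL A B) (x : X) :
    A x ≤ B x := by
  have := (Q.le_subL_iff.1 h) x; rwa [Q.unit_mul] at this

lemma subL_antisymm {X : Type u} {A B : X → L} (h1 : Q.unit ≤ Q.subL A B)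
    (h2 : Q.unit ≤ Q.subL B A) : A = B :=
  funext fun x => le_antisymm (Q.le_of_unit_le_subL h1 x) (Q.le_of_unit_le_subL h2 x)

lemma subL_ux {X : Type u} (x : X) (B : X → L) : Q.subL (Q.ux x) B = B x := by
  apply le_antisymm
  · exact (Q.subL_le_res _ B x).trans (by rw [ux, if_pos rfl, Q.res_unit])
  · rw [Q.le_subL_iff]
    intro y
    by_cases h : y = x
    · subst h; rw [ux, if_pos rfl, Q.mul_unit]
    · rw [ux, if_neg h, Q.mul_bot]; exact bot_le

lemma subL_le_subL {X : Type u} {A A' B B' : X → L} (h1 : ∀ x, A' x ≤ A x)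
    (h2 : ∀ x, B x ≤ B' x) : Q.subL A B ≤ Q.subL A' B' :=
  le_iInf fun x => (iInf_le _ x).trans (Q.res_le_res (h1 x) (h2 x))

lemma mul_subL_le_subL {X : Type u} (a : L) (A B : X → L) :
    Q.mul a (Q.subL A B) ≤ Q.subL A (fun x => Q.mul a (B x)) := by
  rw [Q.le_subL_iff]
  intro x
  rw [Q.mul_assoc, Q.mul_comm (Q.subL A B) (A x)]
  exact Q.mul_le_mul_left a (Q.mul_subL_le A B x)

lemma isLOrder_subL_subtype {X : Type u} (pr : (X → L) → Prop) :
    Q.IsLOrder (fun (U V : {A : X → L // pr A}) => Q.subL U.1 V.1) := by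
  refine ⟨fun U => Q.unit_le_subL_self U.1, fun U V W => Q.subL_trans U.1 V.1 W.1,
    fun U V h1 h2 => Subtype.ext (Q.subL_antisymm h1 h2)⟩

lemma isSupL_le {P : Type u} {e : P → P → L} (hord : Q.IsLOrder e) {D : P → L} {s : P}
    (h : Q.IsSupL e D s) (x : P) : D x ≤ e x s := by
  have h1 : Q.unit ≤ Q.subL D (fun x => e x s) := (h s) ▸ hord.1 s
  exact Q.le_of_unit_le_subL h1 x

lemma isSupL_unique {P : Type u} {e : P → P → L} (hord : Q.IsLOrder e) {D : P → L} {s t : P}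
    (h1 : Q.IsSupL e D s) (h2 : Q.IsSupL e D t) : s = t := by
  apply hord.2.2 s t
  · rw [h1 t, ← h2 t]; exact hord.1 t
  · rw [h2 s, ← h1 s]; exact hord.1 s

end CommQuantale
namespace CommQuantale
variable {L : Type u} [CompleteLattice L] (Q : CommQuantale L)

lemma mul_left_comm (a b c : L) : Q.mul a (Q.mul b c) = Q.mul b (Q.mul a c) := by
  rw [← Q.mul_assoc, Q.mul_comm a b, Q.mul_assoc]

lemma mul_right_comm (a b c : L) : Q.mul (Q.mul a b) c = Q.mul (Q.mul a c) b := by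
  rw [Q.mul_assoc, Q.mul_comm b c, ← Q.mul_assoc]

lemma mul_mul_mul_comm (a b c d : L) :
    Q.mul (Q.mul a b) (Q.mul c d) = Q.mul (Q.mul a c) (Q.mul b d) := by
  rw [Q.mul_assoc, Q.mul_left_comm b c d, ← Q.mul_assoc]

lemma res_iInf {ι : Sort*} (b : L) (f : ι → L) :
    Q.res b (⨅ i, f i) = ⨅ i, Q.res b (f i) := by
  apply le_antisymm
  · exact le_iInf fun i => Q.res_le_res le_rfl (iInf_le f i)
  · rw [Q.le_res_iff]
    exact le_iInf fun i => Q.le_res_iff.1 (iInf_le _ i)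

section Closure

variable {X : Type u} {cl : (X → L) → (X → L)}

/-- The set of directed closed sets. -/
def eC (Q : CommQuantale L) (cl : (X → L) → (X → L)) :
    {U : X → L // Q.IsDirClosed cl U} → {U : X → L // Q.IsDirClosed cl U} → L :=
  fun U V => Q.subL U.1 V.1



lemma unit_le_clux_self (hext : ∀ A : X → L, A ≤ cl A) (x : X) : Q.unit ≤ cl (Q.ux x) x := by
  have := hext (Q.ux x) x
  rwa [ux, if_pos rfl] at this

lemma clux_le_subL (hcl : Q.IsGenClosure cl) (x y : X) : cl (Q.ux x) y ≤ Q.subL (cl (Q.ux y)) (cl (Q.ux x)) := by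
  have h1 : cl (Q.ux x) y = Q.subL (Q.ux y) (cl (Q.ux x)) := (Q.subL_ux y _).symm
  rw [h1]
  exact (hcl.1 (Q.ux y) (cl (Q.ux x))).trans
    (Q.subL_le_subL (fun z => le_rfl) (fun z => hcl.2 (Q.ux x) z))

lemma clux_trans (hcl : Q.IsGenClosure cl) (x y z : X) :
    Q.mul (cl (Q.ux y) z) (cl (Q.ux x) y) ≤ cl (Q.ux x) z := by
  have := Q.mul_le_mul_left (cl (Q.ux y) z) (Q.clux_le_subL hcl x y)
  exact this.trans (Q.mul_subL_le (cl (Q.ux y)) (cl (Q.ux x)) z)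

lemma uxCl_mem (hcl : Q.IsGenClosure cl) (hext : ∀ A : X → L, A ≤ cl A) (x : X) : Q.IsDirClosed cl (cl (Q.ux x)) := by
  refine ⟨?_, ?_, ?_, ?_⟩
  · exact (Q.unit_le_clux_self hext x).trans (le_iSup _ x)
  · exact fun y => Q.clux_le_subL hcl x y
  · intro y
    refine le_trans ?_ (le_iSup _ y)
    calc cl (Q.ux x) y = Q.mul (cl (Q.ux x) y) Q.unit := (Q.mul_unit _).symm
    _ ≤ Q.mul (cl (Q.ux x) y) (cl (Q.ux y) y) :=
        Q.mul_le_mul_left _ (Q.unit_le_clux_self hext y)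
  · intro a b
    refine le_trans ?_ (le_iSup _ x)
    refine Q.mul_le_mul_right _ ?_
    calc cl (Q.ux x) a = Q.mul Q.unit (cl (Q.ux x) a) := (Q.unit_mul _).symm
    _ ≤ Q.mul (cl (Q.ux x) x) (cl (Q.ux x) a) :=
        Q.mul_le_mul_right _ (Q.unit_le_clux_self hext x)

lemma subL_uxCl (hext : ∀ A : X → L, A ≤ cl A) (x : X) (U : {U : X → L // Q.IsDirClosed cl U}) :
    Q.subL (cl (Q.ux x)) U.1 = U.1 x := by
  apply le_antisymm
  · refine (Q.subL_le_res _ U.1 x).trans ?_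
    refine le_trans (Q.res_le_res (Q.unit_le_clux_self hext x) le_rfl) ?_
    rw [Q.res_unit]
  · exact U.2.2.1 x

end Closure
end CommQuantale
namespace CommQuantale
variable {L : Type u} [CompleteLattice L] (Q : CommQuantale L)
variable {X : Type u} {cl : (X → L) → (X → L)}

/-- Canonical supremum of a family of directed closed sets. -/
def SFun (Q : CommQuantale L) (cl : (X → L) → (X → L))
    (D : {U : X → L // Q.IsDirClosed cl U} → L) : X → L :=
  fun x => ⨆ U : {U : X → L // Q.IsDirClosed cl U}, Q.mul (D U) (U.1 x)

lemma SFun_mem {D : {U : X → L // Q.IsDirClosed cl U} → L}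
    (hD : Q.IsDirectedL (eC Q cl) D) : Q.IsDirClosed cl (Q.SFun cl D) := by
  obtain ⟨hD1, hD2⟩ := hD
  refine ⟨?_, ?_, ?_, ?_⟩
  · -- DC1
    refine hD1.trans (iSup_le fun U => ?_)
    calc D U = Q.mul (D U) Q.unit := (Q.mul_unit _).symm
    _ ≤ Q.mul (D U) (⨆ x, U.1 x) := Q.mul_le_mul_left _ U.2.1
    _ = ⨆ x, Q.mul (D U) (U.1 x) := Q.mul_iSup _ _
    _ ≤ ⨆ x, Q.SFun cl D x := iSup_mono fun x => le_iSup (fun V => Q.mul (D V) (V.1 x)) U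
  · -- DC2
    intro x
    refine iSup_le fun U => ?_
    calc Q.mul (D U) (U.1 x) ≤ Q.mul (D U) (Q.subL (cl (Q.ux x)) U.1) :=
          Q.mul_le_mul_left _ (U.2.2.1 x)
    _ ≤ Q.subL (cl (Q.ux x)) (fun y => Q.mul (D U) (U.1 y)) := Q.mul_subL_le_subL _ _ _
    _ ≤ Q.subL (cl (Q.ux x)) (Q.SFun cl D) :=
          Q.subL_le_subL (fun _ => le_rfl) (fun y => le_iSup (fun V => Q.mul (D V) (V.1 y)) U)
  · -- DC3
    intro x
    refine iSup_le fun U => ?_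
    calc Q.mul (D U) (U.1 x)
        ≤ Q.mul (D U) (⨆ y, Q.mul (U.1 y) (cl (Q.ux y) x)) := Q.mul_le_mul_left _ (U.2.2.2.1 x)
    _ = ⨆ y, Q.mul (D U) (Q.mul (U.1 y) (cl (Q.ux y) x)) := Q.mul_iSup _ _
    _ ≤ ⨆ y, Q.mul (Q.SFun cl D y) (cl (Q.ux y) x) := by
        refine iSup_mono fun y => ?_
        rw [← Q.mul_assoc]
        exact Q.mul_le_mul_right _ (le_iSup (fun V => Q.mul (D V) (V.1 y)) U)
  · -- DC4
    intro x y
    have e1 : Q.mul (Q.SFun cl D x) (Q.SFun cl D y)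
        = ⨆ U, ⨆ V, Q.mul (Q.mul (D U) (U.1 x)) (Q.mul (D V) (V.1 y)) := by
      rw [show Q.SFun cl D x = ⨆ U, Q.mul (D U) (U.1 x) from rfl, Q.iSup_mul]
      exact iSup_congr fun U => Q.mul_iSup _ _
    rw [e1]
    refine iSup_le fun U => iSup_le fun V => ?_
    calc Q.mul (Q.mul (D U) (U.1 x)) (Q.mul (D V) (V.1 y))
        = Q.mul (Q.mul (D U) (D V)) (Q.mul (U.1 x) (V.1 y)) := Q.mul_mul_mul_comm _ _ _ _
    _ ≤ Q.mul (⨆ W, Q.mul (Q.mul (D W) (Q.subL U.1 W.1)) (Q.subL V.1 W.1))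
          (Q.mul (U.1 x) (V.1 y)) := Q.mul_le_mul_right _ (hD2 U V)
    _ = ⨆ W, Q.mul (Q.mul (Q.mul (D W) (Q.subL U.1 W.1)) (Q.subL V.1 W.1))
          (Q.mul (U.1 x) (V.1 y)) := Q.iSup_mul _ _
    _ ≤ ⨆ W, Q.mul (Q.mul (D W) (W.1 x)) (W.1 y) := by
        refine iSup_mono fun W => ?_
        calc Q.mul (Q.mul (Q.mul (D W) (Q.subL U.1 W.1)) (Q.subL V.1 W.1))
              (Q.mul (U.1 x) (V.1 y))
            = Q.mul (D W) (Q.mul (Q.mul (U.1 x) (Q.subL U.1 W.1))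
                (Q.mul (V.1 y) (Q.subL V.1 W.1))) := by
              rw [Q.mul_assoc (D W), Q.mul_assoc (D W), Q.mul_mul_mul_comm,
                Q.mul_comm (Q.subL U.1 W.1) (U.1 x), Q.mul_comm (Q.subL V.1 W.1) (V.1 y)]
        _ ≤ Q.mul (D W) (Q.mul (W.1 x) (W.1 y)) :=
              Q.mul_le_mul_left _ (Q.mul_le_mul' (Q.mul_subL_le U.1 W.1 x)
                (Q.mul_subL_le V.1 W.1 y))
        _ = Q.mul (Q.mul (D W) (W.1 x)) (W.1 y) := (Q.mul_assoc _ _ _).symm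
    _ ≤ ⨆ z, Q.mul (Q.mul (Q.SFun cl D z) (cl (Q.ux z) x)) (cl (Q.ux z) y) := by
        refine iSup_le fun W => ?_
        calc Q.mul (Q.mul (D W) (W.1 x)) (W.1 y)
            = Q.mul (D W) (Q.mul (W.1 x) (W.1 y)) := Q.mul_assoc _ _ _
        _ ≤ Q.mul (D W) (⨆ z, Q.mul (Q.mul (W.1 z) (cl (Q.ux z) x)) (cl (Q.ux z) y)) :=
              Q.mul_le_mul_left _ (W.2.2.2.2 x y)
        _ = ⨆ z, Q.mul (D W) (Q.mul (Q.mul (W.1 z) (cl (Q.ux z) x)) (cl (Q.ux z) y)) :=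
              Q.mul_iSup _ _
        _ ≤ ⨆ z, Q.mul (Q.mul (Q.SFun cl D z) (cl (Q.ux z) x)) (cl (Q.ux z) y) := by
              refine iSup_mono fun z => ?_
              rw [← Q.mul_assoc, ← Q.mul_assoc]
              refine Q.mul_le_mul_right _ (Q.mul_le_mul_right _ ?_)
              exact le_iSup (fun V => Q.mul (D V) (V.1 z)) W

lemma SFun_isSup {D : {U : X → L // Q.IsDirClosed cl U} → L}
    (hD : Q.IsDirectedL (eC Q cl) D) :
    Q.IsSupL (eC Q cl) D ⟨Q.SFun cl D, Q.SFun_mem hD⟩ := by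
  intro V
  show Q.subL (Q.SFun cl D) V.1 = _
  calc Q.subL (Q.SFun cl D) V.1
      = ⨅ x, ⨅ U, Q.res (Q.mul (D U) (U.1 x)) (V.1 x) := by
        rw [subL]; exact iInf_congr fun x => Q.res_iSup_left _ _
  _ = ⨅ U, ⨅ x, Q.res (D U) (Q.res (U.1 x) (V.1 x)) := by
        rw [iInf_comm]
        exact iInf_congr fun U => iInf_congr fun x => Q.res_mul_eq _ _ _
  _ = ⨅ U, Q.res (D U) (Q.subL U.1 V.1) := iInf_congr fun U => (Q.res_iInf _ _).symm
  _ = Q.subL D (fun U => eC Q cl U V) := rfl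

lemma dcpo_eC : Q.IsDcpoL (eC Q cl) := fun D hD =>
  ⟨⟨Q.SFun cl D, Q.SFun_mem hD⟩, Q.SFun_isSup hD⟩

lemma compact_spec {P : Type u} {e : P → P → L} {x : P} (hx : Q.unit ≤ Q.wayBelow e x x)
    {D : P → L} (hD : Q.IsDirectedL e D) {s : P} (hs : Q.IsSupL e D s) :
    e x s ≤ ⨆ d, Q.mul (D d) (e x d) := by
  refine Q.le_of_unit_le_res (hx.trans ?_)
  exact iInf_le_of_le D (iInf_le_of_le hD (iInf_le_of_le s (iInf_le _ hs)))

lemma compact_uxCl (hcl : Q.IsGenClosure cl) (hext : ∀ A : X → L, A ≤ cl A) (x : X) :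
    Q.unit ≤ Q.wayBelow (eC Q cl) ⟨cl (Q.ux x), Q.uxCl_mem hcl hext x⟩
      ⟨cl (Q.ux x), Q.uxCl_mem hcl hext x⟩ := by
  rw [wayBelow]
  refine le_iInf fun D => le_iInf fun hD => le_iInf fun s => le_iInf fun hs => ?_
  rw [Q.le_res_iff, Q.unit_mul]
  have hseq : s = ⟨Q.SFun cl D, Q.SFun_mem hD⟩ :=
    Q.isSupL_unique (Q.isLOrder_subL_subtype _) hs (Q.SFun_isSup hD)
  subst hseq
  show Q.subL (cl (Q.ux x)) (Q.SFun cl D) ≤ _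
  rw [Q.subL_uxCl hext x ⟨Q.SFun cl D, Q.SFun_mem hD⟩]
  exact iSup_mono fun U => Q.mul_le_mul_left _ (U.2.2.1 x)

end CommQuantale
namespace CommQuantale
variable {L : Type u} [CompleteLattice L] (Q : CommQuantale L)
variable {X : Type u} {cl : (X → L) → (X → L)}

/-- The family of point-generated approximants of a directed closed set `C`. -/
noncomputable def famD (Q : CommQuantale L) (cl : (X → L) → (X → L))
    (C : {U : X → L // Q.IsDirClosed cl U}) : {U : X → L // Q.IsDirClosed cl U} → L :=
  fun W => ⨆ x, ⨆ _ : W.1 = cl (Q.ux x), C.1 x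

lemma le_famD (C : {U : X → L // Q.IsDirClosed cl U})
    (W : {U : X → L // Q.IsDirClosed cl U}) (x : X) (h : W.1 = cl (Q.ux x)) :
    C.1 x ≤ Q.famD cl C W :=
  le_iSup_of_le x (le_iSup_of_le h le_rfl)

lemma famD_directed (hcl : Q.IsGenClosure cl) (hext : ∀ A : X → L, A ≤ cl A)
    (C : {U : X → L // Q.IsDirClosed cl U}) : Q.IsDirectedL (eC Q cl) (Q.famD cl C) := by
  constructor
  · refine C.2.1.trans (iSup_le fun x => ?_)
    exact le_iSup_of_le ⟨cl (Q.ux x), Q.uxCl_mem hcl hext x⟩ (Q.le_famD C _ x rfl)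
  · intro U V
    rw [show Q.famD cl C U = ⨆ x, ⨆ _ : U.1 = cl (Q.ux x), C.1 x from rfl, Q.iSup_mul]
    refine iSup_le fun x => ?_
    rw [Q.iSup_mul]
    refine iSup_le fun hx => ?_
    rw [show Q.famD cl C V = ⨆ y, ⨆ _ : V.1 = cl (Q.ux y), C.1 y from rfl, Q.mul_iSup]
    refine iSup_le fun y => ?_
    rw [Q.mul_iSup]
    refine iSup_le fun hy => ?_
    refine (C.2.2.2.2 x y).trans (iSup_le fun z => ?_)
    refine le_iSup_of_le ⟨cl (Q.ux z), Q.uxCl_mem hcl hext z⟩ ?_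
    refine Q.mul_le_mul' (Q.mul_le_mul' (Q.le_famD C _ z rfl) ?_) ?_
    · show cl (Q.ux z) x ≤ Q.subL U.1 (cl (Q.ux z))
      rw [hx]
      exact Q.clux_le_subL hcl z x
    · show cl (Q.ux z) y ≤ Q.subL V.1 (cl (Q.ux z))
      rw [hy]
      exact Q.clux_le_subL hcl z y

lemma famD_sup (hcl : Q.IsGenClosure cl) (hext : ∀ A : X → L, A ≤ cl A)
    (C : {U : X → L // Q.IsDirClosed cl U}) : Q.IsSupL (eC Q cl) (Q.famD cl C) C := by
  intro V
  show Q.subL C.1 V.1 = ⨅ W, Q.res (Q.famD cl C W) (Q.subL W.1 V.1)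
  have step1 : ∀ W : {U : X → L // Q.IsDirClosed cl U},
      Q.res (Q.famD cl C W) (Q.subL W.1 V.1)
        = ⨅ x, ⨅ _ : W.1 = cl (Q.ux x), Q.res (C.1 x) (Q.subL W.1 V.1) := by
    intro W
    rw [famD, Q.res_iSup_left]
    exact iInf_congr fun x => Q.res_iSup_left _ _
  have step2 : (⨅ W, Q.res (Q.famD cl C W) (Q.subL W.1 V.1))
      = ⨅ x, Q.res (C.1 x) (Q.subL (cl (Q.ux x)) V.1) := by
    simp only [step1]
    apply le_antisymm
    · refine le_iInf fun x => ?_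
      exact iInf_le_of_le ⟨cl (Q.ux x), Q.uxCl_mem hcl hext x⟩
        (iInf_le_of_le x (iInf_le_of_le rfl le_rfl))
    · refine le_iInf fun W => le_iInf fun x => le_iInf fun h => ?_
      refine iInf_le_of_le x ?_
      rw [h]
  rw [step2]
  exact iInf_congr fun x => by rw [Q.subL_uxCl hext x V]

lemma kfun_uxCl (hcl : Q.IsGenClosure cl) (hext : ∀ A : X → L, A ≤ cl A)
    (C : {U : X → L // Q.IsDirClosed cl U}) (x : X) :
    Q.kfun (eC Q cl) C ⟨cl (Q.ux x), Q.uxCl_mem hcl hext x⟩ = C.1 x := by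
  rw [show Q.kfun (eC Q cl) C ⟨cl (Q.ux x), Q.uxCl_mem hcl hext x⟩
      = Q.subL (cl (Q.ux x)) C.1 from if_pos (Q.compact_uxCl hcl hext x)]
  exact Q.subL_uxCl hext x C

lemma kfun_sup_eC (hcl : Q.IsGenClosure cl) (hext : ∀ A : X → L, A ≤ cl A)
    (C : {U : X → L // Q.IsDirClosed cl U}) :
    Q.IsSupL (eC Q cl) (Q.kfun (eC Q cl) C) C := by
  intro V
  show Q.subL C.1 V.1 = ⨅ U, Q.res (Q.kfun (eC Q cl) C U) (Q.subL U.1 V.1)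
  apply le_antisymm
  · refine le_iInf fun U => ?_
    rw [Q.le_res_iff]
    by_cases h : Q.unit ≤ Q.wayBelow (eC Q cl) U U
    · rw [show Q.kfun (eC Q cl) C U = Q.subL U.1 C.1 from if_pos h, Q.mul_comm]
      exact Q.subL_trans U.1 C.1 V.1
    · rw [show Q.kfun (eC Q cl) C U = ⊥ from if_neg h, Q.mul_bot]
      exact bot_le
  · rw [subL]
    refine le_iInf fun x => ?_
    refine iInf_le_of_le ⟨cl (Q.ux x), Q.uxCl_mem hcl hext x⟩ ?_
    rw [Q.kfun_uxCl hcl hext C x, Q.subL_uxCl hext x V]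

lemma kfun_directed_eC (hcl : Q.IsGenClosure cl) (hext : ∀ A : X → L, A ≤ cl A)
    (C : {U : X → L // Q.IsDirClosed cl U}) :
    Q.IsDirectedL (eC Q cl) (Q.kfun (eC Q cl) C) := by
  constructor
  · refine C.2.1.trans (iSup_le fun x => ?_)
    refine le_iSup_of_le ⟨cl (Q.ux x), Q.uxCl_mem hcl hext x⟩ ?_
    rw [Q.kfun_uxCl hcl hext C x]
  · intro U V
    by_cases hU : Q.unit ≤ Q.wayBelow (eC Q cl) U U
    swap
    · rw [show Q.kfun (eC Q cl) C U = ⊥ from if_neg hU, Q.bot_mul]; exact bot_le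
    by_cases hV : Q.unit ≤ Q.wayBelow (eC Q cl) V V
    swap
    · rw [show Q.kfun (eC Q cl) C V = ⊥ from if_neg hV, Q.mul_bot]; exact bot_le
    rw [show Q.kfun (eC Q cl) C U = Q.subL U.1 C.1 from if_pos hU,
      show Q.kfun (eC Q cl) C V = Q.subL V.1 C.1 from if_pos hV]
    have key : ∀ (W : {U : X → L // Q.IsDirClosed cl U}),
        Q.unit ≤ Q.wayBelow (eC Q cl) W W →
        Q.subL W.1 C.1 ≤ ⨆ x, Q.mul (C.1 x) (Q.subL W.1 (cl (Q.ux x))) := by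
      intro W hW
      have h1 := Q.compact_spec hW (Q.famD_directed hcl hext C) (Q.famD_sup hcl hext C)
      refine h1.trans ?_
      refine iSup_le fun W' => ?_
      show Q.mul (Q.famD cl C W') (Q.subL W.1 W'.1) ≤ _
      rw [famD, Q.iSup_mul]
      refine iSup_le fun x => ?_
      rw [Q.iSup_mul]
      refine iSup_le fun h => ?_
      rw [h, Q.mul_comm]
      exact le_iSup_of_le x (Q.mul_comm _ _).le
    calc Q.mul (Q.subL U.1 C.1) (Q.subL V.1 C.1)
        ≤ Q.mul (⨆ x, Q.mul (C.1 x) (Q.subL U.1 (cl (Q.ux x))))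
            (⨆ y, Q.mul (C.1 y) (Q.subL V.1 (cl (Q.ux y)))) :=
          Q.mul_le_mul' (key U hU) (key V hV)
    _ = ⨆ x, ⨆ y, Q.mul (Q.mul (C.1 x) (Q.subL U.1 (cl (Q.ux x))))
          (Q.mul (C.1 y) (Q.subL V.1 (cl (Q.ux y)))) := by
          rw [Q.iSup_mul]
          exact iSup_congr fun x => Q.mul_iSup _ _
    _ ≤ ⨆ z, Q.mul (Q.mul (Q.kfun (eC Q cl) C z) (Q.subL U.1 z.1)) (Q.subL V.1 z.1) := by
          refine iSup_le fun x => iSup_le fun y => ?_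
          calc Q.mul (Q.mul (C.1 x) (Q.subL U.1 (cl (Q.ux x))))
                (Q.mul (C.1 y) (Q.subL V.1 (cl (Q.ux y))))
              = Q.mul (Q.mul (C.1 x) (C.1 y))
                  (Q.mul (Q.subL U.1 (cl (Q.ux x))) (Q.subL V.1 (cl (Q.ux y)))) :=
                Q.mul_mul_mul_comm _ _ _ _
          _ ≤ Q.mul (⨆ z, Q.mul (Q.mul (C.1 z) (cl (Q.ux z) x)) (cl (Q.ux z) y))
                (Q.mul (Q.subL U.1 (cl (Q.ux x))) (Q.subL V.1 (cl (Q.ux y)))) :=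
                Q.mul_le_mul_right _ (C.2.2.2.2 x y)
          _ = ⨆ z, Q.mul (Q.mul (Q.mul (C.1 z) (cl (Q.ux z) x)) (cl (Q.ux z) y))
                (Q.mul (Q.subL U.1 (cl (Q.ux x))) (Q.subL V.1 (cl (Q.ux y)))) :=
                Q.iSup_mul _ _
          _ ≤ ⨆ z, Q.mul (Q.mul (Q.kfun (eC Q cl) C z) (Q.subL U.1 z.1)) (Q.subL V.1 z.1) := by
                refine iSup_le fun z => ?_
                refine le_iSup_of_le ⟨cl (Q.ux z), Q.uxCl_mem hcl hext z⟩ ?_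
                calc Q.mul (Q.mul (Q.mul (C.1 z) (cl (Q.ux z) x)) (cl (Q.ux z) y))
                      (Q.mul (Q.subL U.1 (cl (Q.ux x))) (Q.subL V.1 (cl (Q.ux y))))
                    = Q.mul (C.1 z) (Q.mul
                        (Q.mul (Q.subL U.1 (cl (Q.ux x))) (cl (Q.ux z) x))
                        (Q.mul (Q.subL V.1 (cl (Q.ux y))) (cl (Q.ux z) y))) := by
                      rw [Q.mul_assoc (C.1 z), Q.mul_assoc (C.1 z), Q.mul_mul_mul_comm,
                        Q.mul_comm (cl (Q.ux z) x), Q.mul_comm (cl (Q.ux z) y)]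
                _ ≤ Q.mul (C.1 z) (Q.mul (Q.subL U.1 (cl (Q.ux z)))
                      (Q.subL V.1 (cl (Q.ux z)))) := by
                      refine Q.mul_le_mul_left _ (Q.mul_le_mul' ?_ ?_)
                      · exact (Q.mul_le_mul_left _ (Q.clux_le_subL hcl z x)).trans
                          (Q.subL_trans U.1 (cl (Q.ux x)) (cl (Q.ux z)))
                      · exact (Q.mul_le_mul_left _ (Q.clux_le_subL hcl z y)).trans
                          (Q.subL_trans V.1 (cl (Q.ux y)) (cl (Q.ux z)))
                _ = Q.mul (Q.mul (Q.kfun (eC Q cl) C ⟨cl (Q.ux z), Q.uxCl_mem hcl hext z⟩)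
                      (Q.subL U.1 (cl (Q.ux z)))) (Q.subL V.1 (cl (Q.ux z))) := by
                      rw [Q.kfun_uxCl hcl hext C z, Q.mul_assoc]

lemma algebraic_eC (hcl : Q.IsGenClosure cl) (hext : ∀ A : X → L, A ≤ cl A) :
    Q.IsAlgebraicLDcpo (eC Q cl) :=
  ⟨Q.isLOrder_subL_subtype _, Q.dcpo_eC,
    fun C => ⟨Q.kfun_directed_eC hcl hext C, Q.kfun_sup_eC hcl hext C⟩⟩

end CommQuantale
namespace CommQuantale
variable {L : Type u} [CompleteLattice L] (Q : CommQuantale L)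
variable {P1 P2 : Type u} {e1 : P1 → P1 → L} {e2 : P2 → P2 → L} {f : P1 ≃ P2}

lemma trans_lorder (hf : ∀ a b, e1 a b = e2 (f a) (f b)) (h : Q.IsLOrder e1) :
    Q.IsLOrder e2 := by
  have hf' : ∀ a b : P2, e2 a b = e1 (f.symm a) (f.symm b) := by
    intro a b; rw [hf, f.apply_symm_apply, f.apply_symm_apply]
  refine ⟨fun x => ?_, fun x y z => ?_, fun x y h1 h2 => ?_⟩
  · rw [hf']; exact h.1 _
  · rw [hf' x y, hf' y z, hf' x z]; exact h.2.1 _ _ _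
  · rw [hf' x y] at h1; rw [hf' y x] at h2
    have := h.2.2 _ _ h1 h2
    calc x = f (f.symm x) := (f.apply_symm_apply x).symm
    _ = f (f.symm y) := by rw [this]
    _ = y := f.apply_symm_apply y

lemma trans_directed (hf : ∀ a b, e1 a b = e2 (f a) (f b)) {D : P1 → L}
    (hD : Q.IsDirectedL e1 D) : Q.IsDirectedL e2 (D ∘ f.symm) := by
  constructor
  · refine hD.1.trans (le_of_eq ?_)
    exact (Equiv.iSup_comp (e := f.symm) (g := D)).symm
  · intro x y
    refine (hD.2 (f.symm x) (f.symm y)).trans (iSup_le fun z => ?_)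
    refine le_iSup_of_le (f z) (le_of_eq ?_)
    rw [hf (f.symm x) z, hf (f.symm y) z, f.apply_symm_apply, f.apply_symm_apply]
    simp only [Function.comp_apply, f.symm_apply_apply]

lemma trans_sup (hf : ∀ a b, e1 a b = e2 (f a) (f b)) {D : P1 → L} {s : P1}
    (hs : Q.IsSupL e1 D s) : Q.IsSupL e2 (D ∘ f.symm) (f s) := by
  intro y
  have h1 : e2 (f s) y = e1 s (f.symm y) := by rw [hf, f.apply_symm_apply]
  rw [h1, hs (f.symm y)]
  show (⨅ x : P1, Q.res (D x) (e1 x (f.symm y)))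
      = ⨅ x : P2, Q.res ((D ∘ f.symm) x) (e2 x y)
  rw [← Equiv.iInf_comp (e := f) (g := fun x : P2 => Q.res ((D ∘ f.symm) x) (e2 x y))]
  refine iInf_congr fun z => ?_
  simp only [Function.comp_apply, f.symm_apply_apply]
  rw [hf z (f.symm y), f.apply_symm_apply]

lemma trans_wayBelow (hf : ∀ a b, e1 a b = e2 (f a) (f b)) (x y : P1) :
    Q.wayBelow e2 (f x) (f y) ≤ Q.wayBelow e1 x y := by
  rw [wayBelow]
  refine le_iInf fun D => le_iInf fun hD => le_iInf fun s => le_iInf fun hs => ?_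
  refine le_trans (iInf_le_of_le (D ∘ f.symm) (iInf_le_of_le (Q.trans_directed hf hD)
    (iInf_le_of_le (f s) (iInf_le _ (Q.trans_sup hf hs))))) (le_of_eq ?_)
  congr 1
  · rw [hf]
  · rw [← Equiv.iSup_comp (e := f)
      (g := fun d : P2 => Q.mul ((D ∘ f.symm) d) (e2 (f y) d))]
    refine iSup_congr fun z => ?_
    simp only [Function.comp_apply, f.symm_apply_apply]
    rw [hf y z]

lemma wayBelow_eq (hf : ∀ a b, e1 a b = e2 (f a) (f b)) (x y : P1) :
    Q.wayBelow e1 x y = Q.wayBelow e2 (f x) (f y) := by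
  have hf' : ∀ a b : P2, e2 a b = e1 (f.symm a) (f.symm b) := by
    intro a b; rw [hf, f.apply_symm_apply, f.apply_symm_apply]
  refine le_antisymm ?_ (Q.trans_wayBelow hf x y)
  have := Q.trans_wayBelow (f := f.symm) hf' (f x) (f y)
  simpa only [f.symm_apply_apply] using this

lemma trans_kfun (hf : ∀ a b, e1 a b = e2 (f a) (f b)) (x : P1) :
    Q.kfun e2 (f x) = (Q.kfun e1 x) ∘ f.symm := by
  funext y
  have h1 : Q.wayBelow e2 y y = Q.wayBelow e1 (f.symm y) (f.symm y) := by
    rw [Q.wayBelow_eq hf (f.symm y) (f.symm y), f.apply_symm_apply]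
  have h2 : e2 y (f x) = e1 (f.symm y) x := by
    rw [hf, f.apply_symm_apply]
  classical
  simp only [kfun, Function.comp_apply, h2]
  exact if_congr (by rw [h1]) rfl rfl

lemma trans_algebraic (hf : ∀ a b, e1 a b = e2 (f a) (f b))
    (h : Q.IsAlgebraicLDcpo e1) : Q.IsAlgebraicLDcpo e2 := by
  have hf' : ∀ a b : P2, e2 a b = e1 (f.symm a) (f.symm b) := by
    intro a b; rw [hf, f.apply_symm_apply, f.apply_symm_apply]
  obtain ⟨hord, hdcpo, halg⟩ := h
  refine ⟨Q.trans_lorder hf hord, ?_, ?_⟩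
  · intro D hD
    have hD1 : Q.IsDirectedL e1 (D ∘ f) := by
      have := Q.trans_directed (f := f.symm) hf' hD
      simpa only [Equiv.symm_symm] using this
    obtain ⟨s, hs⟩ := hdcpo (D ∘ f) hD1
    refine ⟨f s, ?_⟩
    have := Q.trans_sup hf hs
    have heq : (D ∘ f) ∘ f.symm = D := funext fun z => by
      simp only [Function.comp_apply, f.apply_symm_apply]
    rwa [heq] at this
  · intro x
    obtain ⟨hd, hsup⟩ := halg (f.symm x)
    constructor
    · have := Q.trans_directed hf hd
      rw [← Q.trans_kfun hf (f.symm x), f.apply_symm_apply] at this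
      exact this
    · have := Q.trans_sup hf hsup
      rw [← Q.trans_kfun hf (f.symm x), f.apply_symm_apply] at this
      exact this

end CommQuantale
namespace CommQuantale
variable {L : Type u} [CompleteLattice L] (Q : CommQuantale L)
variable {P : Type u}

/-- The type of compact elements. -/
def Kt (Q : CommQuantale L) (e : P → P → L) : Type u :=
  {y : P // Q.unit ≤ Q.wayBelow e y y}

/-- Closure operator: down-closure among compact elements. -/
def clK (Q : CommQuantale L) (e : P → P → L) : (Q.Kt e → L) → (Q.Kt e → L) :=
  fun A y => ⨆ x, Q.mul (A x) (e y.1 x.1)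

/-- Extension of an `L`-subset of compacts to `P`. -/
noncomputable def extK (Q : CommQuantale L) (e : P → P → L) (U : Q.Kt e → L) : P → L :=
  fun p => ⨆ y : Q.Kt e, ⨆ _ : y.1 = p, U y

variable {e : P → P → L}

lemma le_extK (U : Q.Kt e → L) (y : Q.Kt e) : U y ≤ Q.extK e U y.1 :=
  le_iSup_of_le y (le_iSup_of_le rfl le_rfl)

lemma clK_ext (hord : Q.IsLOrder e) (A : Q.Kt e → L) : A ≤ Q.clK e A := by
  intro y
  refine le_iSup_of_le y ?_
  calc A y = Q.mul (A y) Q.unit := (Q.mul_unit _).symm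
  _ ≤ Q.mul (A y) (e y.1 y.1) := Q.mul_le_mul_left _ (hord.1 y.1)

lemma clK_genClosure (hord : Q.IsLOrder e) : Q.IsGenClosure (Q.clK e) := by
  constructor
  · intro A B
    rw [Q.le_subL_iff]
    intro y
    rw [Q.mul_comm, clK, Q.iSup_mul]
    refine iSup_le fun x => le_iSup_of_le x ?_
    calc Q.mul (Q.mul (A x) (e y.1 x.1)) (Q.subL A B)
        = Q.mul (Q.mul (A x) (Q.subL A B)) (e y.1 x.1) := Q.mul_right_comm _ _ _
    _ ≤ Q.mul (B x) (e y.1 x.1) := Q.mul_le_mul_right _ (Q.mul_subL_le A B x)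
  · intro A y
    show (⨆ x, Q.mul (Q.clK e A x) (e y.1 x.1)) ≤ ⨆ z, Q.mul (A z) (e y.1 z.1)
    refine iSup_le fun x => ?_
    rw [show Q.clK e A x = ⨆ z, Q.mul (A z) (e x.1 z.1) from rfl, Q.iSup_mul]
    refine iSup_le fun z => le_iSup_of_le z ?_
    calc Q.mul (Q.mul (A z) (e x.1 z.1)) (e y.1 x.1)
        = Q.mul (A z) (Q.mul (e y.1 x.1) (e x.1 z.1)) := by
          rw [Q.mul_assoc, Q.mul_comm (e x.1 z.1)]
    _ ≤ Q.mul (A z) (e y.1 z.1) := Q.mul_le_mul_left _ (hord.2.1 y.1 x.1 z.1)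

lemma clK_ux (x : Q.Kt e) : Q.clK e (Q.ux x) = fun y => e y.1 x.1 := by
  funext y
  apply le_antisymm
  · refine iSup_le fun z => ?_
    by_cases h : z = x
    · subst h; rw [ux, if_pos rfl, Q.mul_comm, Q.mul_unit]
    · rw [ux, if_neg h, Q.bot_mul]; exact bot_le
  · refine le_iSup_of_le x ?_
    rw [ux, if_pos rfl, Q.mul_comm, Q.mul_unit]

end CommQuantale
namespace CommQuantale
variable {L : Type u} [CompleteLattice L] (Q : CommQuantale L)
variable {P : Type u} {e : P → P → L}

lemma res_bot (c : L) : Q.res ⊥ c = ⊤ :=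
  le_antisymm le_top (by rw [Q.le_res_iff, Q.mul_bot]; exact bot_le)

lemma Gmem (halg : Q.IsAlgebraicLDcpo e) (p : P) :
    Q.IsDirClosed (Q.clK e) (fun y : Q.Kt e => e y.1 p) := by
  obtain ⟨hord, hdcpo, halg2⟩ := halg
  refine ⟨?_, ?_, ?_, ?_⟩
  · refine (halg2 p).1.1.trans (iSup_le fun q => ?_)
    by_cases h : Q.unit ≤ Q.wayBelow e q q
    · rw [show Q.kfun e p q = e q p from if_pos h]
      exact le_iSup (fun y : Q.Kt e => e y.1 p) ⟨q, h⟩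
    · rw [show Q.kfun e p q = ⊥ from if_neg h]; exact bot_le
  · intro y
    simp only [Q.clK_ux]
    rw [Q.le_subL_iff]
    intro z
    rw [Q.mul_comm]
    exact hord.2.1 z.1 y.1 p
  · intro y
    simp only [Q.clK_ux]
    refine le_iSup_of_le y ?_
    calc e y.1 p = Q.mul (e y.1 p) Q.unit := (Q.mul_unit _).symm
    _ ≤ Q.mul (e y.1 p) (e y.1 y.1) := Q.mul_le_mul_left _ (hord.1 y.1)
  · intro y z
    simp only [Q.clK_ux]
    have h := (halg2 p).1.2 y.1 z.1
    rw [show Q.kfun e p y.1 = e y.1 p from if_pos y.2,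
      show Q.kfun e p z.1 = e z.1 p from if_pos z.2] at h
    refine h.trans (iSup_le fun r => ?_)
    by_cases hr : Q.unit ≤ Q.wayBelow e r r
    · rw [show Q.kfun e p r = e r p from if_pos hr]
      exact le_iSup_of_le (⟨r, hr⟩ : Q.Kt e) le_rfl
    · rw [show Q.kfun e p r = ⊥ from if_neg hr, Q.bot_mul, Q.bot_mul]; exact bot_le

lemma extK_directed (halg : Q.IsAlgebraicLDcpo e)
    (U : {U : Q.Kt e → L // Q.IsDirClosed (Q.clK e) U}) :
    Q.IsDirectedL e (Q.extK e U.1) := by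
  constructor
  · exact U.2.1.trans (iSup_le fun y => (Q.le_extK U.1 y).trans (le_iSup _ y.1))
  · intro p q
    rw [show Q.extK e U.1 p = ⨆ y, ⨆ _ : y.1 = p, U.1 y from rfl, Q.iSup_mul]
    refine iSup_le fun y => ?_
    rw [Q.iSup_mul]
    refine iSup_le fun hy => ?_
    rw [show Q.extK e U.1 q = ⨆ z, ⨆ _ : z.1 = q, U.1 z from rfl, Q.mul_iSup]
    refine iSup_le fun z => ?_
    rw [Q.mul_iSup]
    refine iSup_le fun hz => ?_
    have h := U.2.2.2.2 y z
    simp only [Q.clK_ux] at h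
    refine h.trans (iSup_le fun w => ?_)
    refine le_iSup_of_le w.1 ?_
    subst hy; subst hz
    exact Q.mul_le_mul' (Q.mul_le_mul' (Q.le_extK U.1 w) le_rfl) le_rfl

lemma extK_res (U : Q.Kt e → L) (p : P) :
    Q.subL (Q.extK e U) (fun q => e q p) = ⨅ y : Q.Kt e, Q.res (U y) (e y.1 p) := by
  rw [subL]
  have hq : ∀ q, Q.res (Q.extK e U q) (e q p)
      = ⨅ y : Q.Kt e, ⨅ _ : y.1 = q, Q.res (U y) (e q p) := by
    intro q
    rw [show Q.extK e U q = ⨆ y, ⨆ _ : y.1 = q, U y from rfl, Q.res_iSup_left]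
    exact iInf_congr fun y => Q.res_iSup_left _ _
  simp only [hq]
  apply le_antisymm
  · exact le_iInf fun y => iInf_le_of_le y.1 (iInf_le_of_le y (iInf_le_of_le rfl le_rfl))
  · refine le_iInf fun q => le_iInf fun y => le_iInf fun h => ?_
    exact iInf_le_of_le y (le_of_eq (by rw [h]))

lemma forward (halg : Q.IsAlgebraicLDcpo e) :
    ∃ f : {U : Q.Kt e → L // Q.IsDirClosed (Q.clK e) U} ≃ P,
      ∀ U V, Q.subL U.1 V.1 = e (f U) (f V) := by
  have hord := halg.1
  have hFex : ∀ U : {U : Q.Kt e → L // Q.IsDirClosed (Q.clK e) U},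
      ∃ s, Q.IsSupL e (Q.extK e U.1) s := fun U => halg.2.1 _ (Q.extK_directed halg U)
  choose F hF using hFex
  let G : P → {U : Q.Kt e → L // Q.IsDirClosed (Q.clK e) U} :=
    fun p => ⟨fun y => e y.1 p, Q.Gmem halg p⟩
  have hA : ∀ (U : {U : Q.Kt e → L // Q.IsDirClosed (Q.clK e) U}) (p : P),
      Q.subL U.1 (G p).1 = e (F U) p := by
    intro U p
    rw [hF U p, Q.extK_res U.1 p]
    rfl
  have hGF : ∀ U, G (F U) = U := by
    intro U
    apply Subtype.ext
    funext y
    apply le_antisymm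
    · have h1 := Q.compact_spec y.2 (Q.extK_directed halg U) (hF U)
      refine h1.trans (iSup_le fun d => ?_)
      rw [show Q.extK e U.1 d = ⨆ z, ⨆ _ : z.1 = d, U.1 z from rfl, Q.iSup_mul]
      refine iSup_le fun z => ?_
      rw [Q.iSup_mul]
      refine iSup_le fun hz => ?_
      subst hz
      have h2 := U.2.2.1 z
      have h3 := Q.mul_subL_le (Q.clK e (Q.ux z)) U.1 y
      simp only [Q.clK_ux] at h2 h3
      calc Q.mul (U.1 z) (e y.1 z.1)
          ≤ Q.mul (Q.subL (fun w : Q.Kt e => e w.1 z.1) U.1) (e y.1 z.1) :=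
            Q.mul_le_mul_right _ h2
      _ = Q.mul (e y.1 z.1) (Q.subL (fun w : Q.Kt e => e w.1 z.1) U.1) := Q.mul_comm _ _
      _ ≤ U.1 y := h3
    · exact (Q.le_extK U.1 y).trans (Q.isSupL_le hord (hF U) y.1)
  have hFG : ∀ p, F (G p) = p := by
    intro p
    refine Q.isSupL_unique hord (hF (G p)) ?_
    intro r
    rw [(halg.2.2 p).2 r]
    have h4 : Q.subL (Q.extK e (G p).1) (fun q => e q r)
        = ⨅ y : Q.Kt e, Q.res (e y.1 p) (e y.1 r) := Q.extK_res (G p).1 r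
    rw [h4]
    apply le_antisymm
    · refine le_iInf fun y => iInf_le_of_le y.1 (le_of_eq ?_)
      rw [show Q.kfun e p y.1 = e y.1 p from if_pos y.2]
    · refine le_iInf fun q => ?_
      by_cases h : Q.unit ≤ Q.wayBelow e q q
      · refine iInf_le_of_le ⟨q, h⟩ (le_of_eq ?_)
        rw [show Q.kfun e p q = e q p from if_pos h]
      · rw [show Q.kfun e p q = ⊥ from if_neg h, Q.res_bot]
        exact le_top
  refine ⟨⟨F, G, hGF, hFG⟩, fun U V => ?_⟩
  show Q.subL U.1 V.1 = e (F U) (F V)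
  rw [← hA U (F V), hGF V]

end CommQuantale
open CommQuantale in
/-- An L-ordered set (P,e) is an algebraic L-dcpo iff there is an
L-closure space (X, ⟨·⟩) with (𝔠(X), sub) ≅ (P, e). -/
theorem stmt15 {L P : Type u} [CompleteLattice L] (Q : CommQuantale L)
    (e : P → P → L) (hord : Q.IsLOrder e) :
    Q.IsAlgebraicLDcpo e ↔
      ∃ (X : Type u) (cl : (X → L) → (X → L)),
        Q.IsGenClosure cl ∧ (∀ A : X → L, A ≤ cl A) ∧
        ∃ f : {U : X → L // Q.IsDirClosed cl U} ≃ P,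
          ∀ U V : {U : X → L // Q.IsDirClosed cl U},
            Q.subL U.1 V.1 = e (f U) (f V) := by
  constructor
  · intro halg
    obtain ⟨f, hfp⟩ := Q.forward halg
    exact ⟨Q.Kt e, Q.clK e, Q.clK_genClosure hord, Q.clK_ext hord, f, hfp⟩
  · rintro ⟨X, cl, hcl, hext, f, hfp⟩
    exact Q.trans_algebraic (e1 := Q.eC cl) (e2 := e) (f := f)
      (fun U V => hfp U V) (Q.algebraic_eC hcl hext)
end
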